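/- arXiv:2208.14779 — 4 statements merged into one kernel-verified Lean document; each statement's English description precedes it below -/
import Mathlib

section
/- Let D ⊆ ℝ^d be compact, (f_n) a sequence of continuous functions D → ℝ, (λ_n) a summable sequence of positive reals, and suppose the series K(x,y) = Σ_n λ_n f_n(x) f_n(y) converges pointwise on D × D to a continuous function K. Then for all x,y ∈ D and all n, |Σ_{j≤n} λ_j (f_j(x)² - f_j(y)²)| ≤ 2√(‖K‖_∞) · √(K(x,x) - 2K(x,y) + K(y,y)), where ‖K‖_∞ = sup_{D×D} |K|. -/
open Filter

theorem partial_sum_square_increment_bound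
    (d : ℕ) (D : Set (EuclideanSpace ℝ (Fin d))) (hD : IsCompact D)
    (f : ℕ → EuclideanSpace ℝ (Fin d) → ℝ) (hf : ∀ n, ContinuousOn (f n) D)
    (lam : ℕ → ℝ) (hlampos : ∀ n, 0 < lam n) (hlamsum : Summable lam)
    (K : EuclideanSpace ℝ (Fin d) → EuclideanSpace ℝ (Fin d) → ℝ)
    (hK : ∀ x ∈ D, ∀ y ∈ D, HasSum (fun n => lam n * f n x * f n y) (K x y))
    (hKcont : ContinuousOn (fun p : EuclideanSpace ℝ (Fin d) × EuclideanSpace ℝ (Fin d) => K p.1 p.2) (D ×ˢ D)) :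
    ∀ x ∈ D, ∀ y ∈ D, ∀ n : ℕ,
      |∑ j ∈ Finset.range (n + 1), lam j * ((f j x) ^ 2 - (f j y) ^ 2)| ≤
        2 * Real.sqrt (sSup (Set.image2 (fun x y => |K x y|) D D)) *
          Real.sqrt (K x x - 2 * K x y + K y y) := by
  intro x hx y hy n
  set M := sSup (Set.image2 (fun x y => |K x y|) D D) with hMdef
  -- the sup is a genuine upper bound
  have himg : Set.image2 (fun x y => |K x y|) D D
      = (fun p : EuclideanSpace ℝ (Fin d) × EuclideanSpace ℝ (Fin d) => |K p.1 p.2|) '' (D ×ˢ D) :=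
    (Set.image_prod _).symm
  have hcomp : IsCompact (Set.image2 (fun x y => |K x y|) D D) := by
    rw [himg]
    exact (hD.prod hD).image_of_continuousOn hKcont.abs
  have hbdd : BddAbove (Set.image2 (fun x y => |K x y|) D D) := hcomp.bddAbove
  have hM : ∀ a ∈ D, ∀ b ∈ D, |K a b| ≤ M := fun a ha b hb =>
    le_csSup hbdd (Set.mem_image2_of_mem ha hb)
  have hM0 : 0 ≤ M := le_trans (abs_nonneg _) (hM x hx x hx)
  -- HasSum facts
  have hminus : HasSum (fun n => lam n * (f n x - f n y) ^ 2)
      (K x x - 2 * K x y + K y y) := by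
    have h := ((hK x hx x hx).sub ((hK x hx y hy).mul_left 2)).add (hK y hy y hy)
    convert h using 2 with m
    case e'_3 => rfl
    ring
  have hplus : HasSum (fun n => lam n * (f n x + f n y) ^ 2)
      (K x x + 2 * K x y + K y y) := by
    have h := ((hK x hx x hx).add ((hK x hx y hy).mul_left 2)).add (hK y hy y hy)
    convert h using 2 with m
    ring
  have hmnn : ∀ m : ℕ, 0 ≤ lam m * (f m x - f m y) ^ 2 := fun m =>
    mul_nonneg (hlampos m).le (sq_nonneg _)
  have hpnn : ∀ m : ℕ, 0 ≤ lam m * (f m x + f m y) ^ 2 := fun m =>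
    mul_nonneg (hlampos m).le (sq_nonneg _)
  set s := Finset.range (n + 1)
  set A := ∑ j ∈ s, lam j * (f j x - f j y) ^ 2 with hA
  set B := ∑ j ∈ s, lam j * (f j x + f j y) ^ 2 with hB
  have hAle : A ≤ K x x - 2 * K x y + K y y :=
    sum_le_hasSum s (fun m _ => hmnn m) hminus
  have hBle : B ≤ K x x + 2 * K x y + K y y :=
    sum_le_hasSum s (fun m _ => hpnn m) hplus
  have hB4M : B ≤ 4 * M := by
    have h1 : K x x ≤ M := (le_abs_self _).trans (hM x hx x hx)
    have h2 : K x y ≤ M := (le_abs_self _).trans (hM x hx y hy)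
    have h2' : -M ≤ K x y := neg_le_of_abs_le (hM x hx y hy)
    have h3 : K y y ≤ M := (le_abs_self _).trans (hM y hy y hy)
    nlinarith
  have hA0 : 0 ≤ A := Finset.sum_nonneg fun m _ => hmnn m
  have hB0 : 0 ≤ B := Finset.sum_nonneg fun m _ => hpnn m
  -- Cauchy-Schwarz
  have hcss : (∑ j ∈ s, (Real.sqrt (lam j) * (f j x - f j y)) * (Real.sqrt (lam j) * (f j x + f j y))) ^ 2
      ≤ A * B := by
    have := Finset.sum_mul_sq_le_sq_mul_sq s
        (fun j => Real.sqrt (lam j) * (f j x - f j y))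
        (fun j => Real.sqrt (lam j) * (f j x + f j y))
    calc (∑ j ∈ s, (Real.sqrt (lam j) * (f j x - f j y)) * (Real.sqrt (lam j) * (f j x + f j y))) ^ 2
        ≤ (∑ j ∈ s, (Real.sqrt (lam j) * (f j x - f j y)) ^ 2) *
          (∑ j ∈ s, (Real.sqrt (lam j) * (f j x + f j y)) ^ 2) := this
      _ = A * B := by
          rw [hA, hB]
          congr 1 <;>
          · apply Finset.sum_congr rfl
            intro j _
            rw [mul_pow, Real.sq_sqrt (hlampos j).le]
  have hsum_eq : (∑ j ∈ s, (Real.sqrt (lam j) * (f j x - f j y)) * (Real.sqrt (lam j) * (f j x + f j y)))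
      = ∑ j ∈ s, lam j * ((f j x) ^ 2 - (f j y) ^ 2) := by
    apply Finset.sum_congr rfl; intro j _
    have : Real.sqrt (lam j) * Real.sqrt (lam j) = lam j := Real.mul_self_sqrt (hlampos j).le
    nlinarith [this]
  have habs : |∑ j ∈ s, lam j * ((f j x) ^ 2 - (f j y) ^ 2)| ≤ Real.sqrt (A * B) := by
    rw [← hsum_eq, ← Real.sqrt_sq_eq_abs]
    exact Real.sqrt_le_sqrt hcss
  have hfinal : Real.sqrt (A * B) ≤ 2 * Real.sqrt M * Real.sqrt (K x x - 2 * K x y + K y y) := by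
    rw [Real.sqrt_mul hA0]
    have h1 : Real.sqrt A ≤ Real.sqrt (K x x - 2 * K x y + K y y) := Real.sqrt_le_sqrt hAle
    have h2 : Real.sqrt B ≤ 2 * Real.sqrt M := by
      have : Real.sqrt (4 * M) = 2 * Real.sqrt M := by
        rw [show (4:ℝ) = 2^2 by norm_num, Real.sqrt_mul (by positivity), Real.sqrt_sq (by norm_num)]
      rw [← this]
      exact Real.sqrt_le_sqrt hB4M
    calc Real.sqrt A * Real.sqrt B ≤ Real.sqrt (K x x - 2 * K x y + K y y) * (2 * Real.sqrt M) :=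
          mul_le_mul h1 h2 (Real.sqrt_nonneg _) (Real.sqrt_nonneg _)
      _ = 2 * Real.sqrt M * Real.sqrt (K x x - 2 * K x y + K y y) := by ring
  exact habs.trans hfinal
end

section
/- Let D ⊆ ℝ^d be compact, (f_n) a sequence of continuous functions on D, (λ_n) a summable sequence of positive reals. If the series Σ_n λ_n f_n(x) f_n(y) converges pointwise on D × D to a continuous function K, then the sequence of partial sums v_n(x) := Σ_{j≤n} λ_j f_j(x)² is equicontinuous on D. -/
open Filter

theorem vn_equicontinuous_of_continuous_kernel
    (d : ℕ) (D : Set (EuclideanSpace ℝ (Fin d))) (hD : IsCompact D)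
    (f : ℕ → EuclideanSpace ℝ (Fin d) → ℝ) (hf : ∀ n, ContinuousOn (f n) D)
    (lam : ℕ → ℝ) (hlampos : ∀ n, 0 < lam n) (hlamsum : Summable lam)
    (K : EuclideanSpace ℝ (Fin d) → EuclideanSpace ℝ (Fin d) → ℝ)
    (hK : ∀ x ∈ D, ∀ y ∈ D, HasSum (fun n => lam n * f n x * f n y) (K x y))
    (hKcont : ContinuousOn (fun p : EuclideanSpace ℝ (Fin d) × EuclideanSpace ℝ (Fin d) => K p.1 p.2) (D ×ˢ D)) :
    ∀ ε > 0, ∃ δ > 0, ∀ x ∈ D, ∀ y ∈ D, dist x y < δ → ∀ n : ℕ,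
      |(∑ j ∈ Finset.range (n + 1), lam j * (f j x) ^ 2) -
        (∑ j ∈ Finset.range (n + 1), lam j * (f j y) ^ 2)| ≤ ε := by
  intro ε hε
  set v : ℕ → EuclideanSpace ℝ (Fin d) → ℝ := fun n x => ∑ j ∈ Finset.range (n + 1), lam j * (f j x) ^ 2 with hv
  set g : EuclideanSpace ℝ (Fin d) → ℝ := fun x => K x x with hg
  have hε3 : (0:ℝ) < ε / 3 := by linarith
  -- continuity of each partial sum
  have hvcont : ∀ n, ContinuousOn (v n) D := by
    intro n
    exact continuousOn_finset_sum _ (fun j _ => continuousOn_const.mul ((hf j).pow 2))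
  -- continuity of the diagonal
  have hgcont : ContinuousOn g D := by
    have : ContinuousOn (fun x : EuclideanSpace ℝ (Fin d) => (x, x)) D := (continuousOn_id).prodMk continuousOn_id
    exact hKcont.comp this (fun x hx => Set.mk_mem_prod hx hx)
  -- monotonicity in n
  have hmono : ∀ x, ∀ m n : ℕ, m ≤ n → v m x ≤ v n x := by
    intro x m n hmn
    apply Finset.sum_le_sum_of_subset_of_nonneg
    · exact Finset.range_subset_range.2 (by omega)
    · intro j _ _
      exact mul_nonneg (hlampos j).le (sq_nonneg _)
  -- pointwise convergence to g
  have hlim : ∀ x ∈ D, Tendsto (fun n => v n x) atTop (nhds (g x)) := by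
    intro x hx
    have h1 : HasSum (fun n => lam n * (f n x) ^ 2) (g x) := by
      have := hK x hx x hx
      simpa [mul_assoc, sq] using this
    have h2 := h1.tendsto_sum_nat
    exact h2.comp (tendsto_add_atTop_nat 1)
  -- v n x ≤ g x
  have hle : ∀ x ∈ D, ∀ n, v n x ≤ g x := by
    intro x hx n
    refine ge_of_tendsto (hlim x hx) ?_
    filter_upwards [eventually_ge_atTop n] with m hm
    exact hmono x n m hm
  -- Dini step: one uniform index
  obtain ⟨N, hN⟩ : ∃ N : ℕ, ∀ y ∈ D, g y - v N y ≤ ε / 3 := by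
    -- for each x ∈ D pick an index and a neighborhood
    have key : ∀ x : EuclideanSpace ℝ (Fin d), x ∈ D → ∃ n : ℕ, ∃ U ∈ nhds x, ∀ y ∈ U ∩ D, g y - v n y ≤ ε / 3 := by
      intro x hx
      obtain ⟨n, hn⟩ : ∃ n, g x - v n x < ε / 3 := by
        have := (hlim x hx).eventually (eventually_gt_nhds (show g x - ε/3 < g x by linarith))
        obtain ⟨n, hn⟩ := this.exists
        exact ⟨n, by linarith⟩
      have hcont : ContinuousWithinAt (fun y => g y - v n y) D x :=
        ((hgcont.sub (hvcont n)) x hx)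
      have hev : ∀ᶠ y in nhdsWithin x D, g y - v n y < ε / 3 :=
        hcont.eventually_lt continuousWithinAt_const hn
      rw [eventually_nhdsWithin_iff] at hev
      obtain ⟨U, hU, hUopen, hxU⟩ := eventually_nhds_iff.1 hev
      exact ⟨n, U, hUopen.mem_nhds hxU, fun y hy => (hU y hy.1 hy.2).le⟩
    choose! n U hUnhds hUprop using key
    obtain ⟨t, ht⟩ := hD.elim_nhds_subcover' (fun x hx => U x) (fun x hx => hUnhds x hx)
    refine ⟨t.sup (fun z : D => n ↑z), fun y hy => ?_⟩
    obtain ⟨x, hxt, hyU⟩ := Set.mem_iUnion₂.1 (ht hy)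
    have h1 := hUprop x x.2 y ⟨hyU, hy⟩
    have h2 : v (n ↑x) y ≤ v (t.sup (fun z : D => n ↑z)) y :=
      hmono y _ _ (Finset.le_sup (f := fun z : D => n ↑z) hxt)
    linarith
  -- uniform continuity of the first N+1 partial sums, with a common δ
  have hfin : ∀ M : ℕ, ∃ δ > 0, ∀ j ≤ M, ∀ x ∈ D, ∀ y ∈ D, dist x y < δ →
      |v j x - v j y| ≤ ε / 3 := by
    intro M
    induction M with
    | zero =>
      have huc := hD.uniformContinuousOn_of_continuous (hvcont 0)
      obtain ⟨δ, hδ, hδ'⟩ := (Metric.uniformContinuousOn_iff.1 huc) (ε/3) hε3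
      refine ⟨δ, hδ, fun j hj x hx y hy hxy => ?_⟩
      interval_cases j
      rw [← Real.dist_eq]
      exact (hδ' x hx y hy hxy).le
    | succ M ih =>
      obtain ⟨δ₁, hδ₁, h1⟩ := ih
      have huc := hD.uniformContinuousOn_of_continuous (hvcont (M+1))
      obtain ⟨δ₂, hδ₂, h2⟩ := (Metric.uniformContinuousOn_iff.1 huc) (ε/3) hε3
      refine ⟨min δ₁ δ₂, lt_min hδ₁ hδ₂, fun j hj x hx y hy hxy => ?_⟩
      rcases Nat.lt_succ_iff_lt_or_eq.1 (Nat.lt_succ_of_le hj) with h | h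
      · exact h1 j (Nat.lt_succ_iff.1 h) x hx y hy (hxy.trans_le (min_le_left _ _))
      · subst h
        rw [← Real.dist_eq]
        exact (h2 x hx y hy (hxy.trans_le (min_le_right _ _))).le
  obtain ⟨δ, hδ, hδ'⟩ := hfin N
  refine ⟨δ, hδ, fun x hx y hy hxy n => ?_⟩
  show |v n x - v n y| ≤ ε
  rcases le_or_gt n N with h | h
  · have := hδ' n h x hx y hy hxy
    linarith
  · have hNn : N ≤ n := h.le
    have h1 : v N x ≤ v n x := hmono x N n hNn
    have h2 : v N y ≤ v n y := hmono y N n hNn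
    have h3 : v n x ≤ g x := hle x hx n
    have h4 : v n y ≤ g y := hle y hy n
    have h5 : g x - v N x ≤ ε / 3 := hN x hx
    have h6 : g y - v N y ≤ ε / 3 := hN y hy
    have h7 : |v N x - v N y| ≤ ε / 3 := hδ' N le_rfl x hx y hy hxy
    have h8 : v n x - v n y = (v n x - v N x) + (v N x - v N y) + (v N y - v n y) := by ring
    rw [abs_le] at h7 ⊢
    constructor <;> [linarith [h7.1]; linarith [h7.2]]
end

section
/- Let D ⊆ ℝ^d be compact and K : D × D → ℝ be a continuous symmetric positive-semidefinite kernel expressed as K = Σ_n λ_n f_n ⊗ f_n with λ_n > 0, f_n continuous, convergence pointwise. If the limit kernel K is continuous, then the convergence of the partial sums Σ_{j≤n} λ_j f_j(x) f_j(y) to K is uniform on D × D. -/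
open Filter

set_option maxHeartbeats 1600000

theorem uniform_convergence_of_pointwise_to_continuous
    (d : ℕ) (D : Set (EuclideanSpace ℝ (Fin d))) (hD : IsCompact D)
    (f : ℕ → EuclideanSpace ℝ (Fin d) → ℝ) (hf : ∀ n, ContinuousOn (f n) D)
    (lam : ℕ → ℝ) (hlampos : ∀ n, 0 < lam n) (hlamsum : Summable lam)
    (K : EuclideanSpace ℝ (Fin d) → EuclideanSpace ℝ (Fin d) → ℝ)
    (hK : ∀ x ∈ D, ∀ y ∈ D, HasSum (fun n => lam n * f n x * f n y) (K x y))
    (hKsymm : ∀ x ∈ D, ∀ y ∈ D, K x y = K y x)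
    (hKpsd : ∀ (m : ℕ) (x : Fin m → EuclideanSpace ℝ (Fin d)) (c : Fin m → ℝ),
      (∀ i, x i ∈ D) → 0 ≤ ∑ i, ∑ k, c i * c k * K (x i) (x k))
    (hKcont : ContinuousOn (fun p : EuclideanSpace ℝ (Fin d) × EuclideanSpace ℝ (Fin d) => K p.1 p.2) (D ×ˢ D)) :
    TendstoUniformlyOn
      (fun n (p : EuclideanSpace ℝ (Fin d) × EuclideanSpace ℝ (Fin d)) =>
        ∑ j ∈ Finset.range (n + 1), lam j * f j p.1 * f j p.2)
      (fun p => K p.1 p.2) atTop (D ×ˢ D) := by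
  classical
  -- diagonal tail function
  set t : ℕ → EuclideanSpace ℝ (Fin d) → ℝ :=
    fun n x => K x x - ∑ j ∈ Finset.range (n + 1), lam j * f j x * f j x with ht
  have hterm_nonneg : ∀ (n : ℕ) (x : EuclideanSpace ℝ (Fin d)),
      0 ≤ lam n * f n x * f n x := by
    intro n x
    have h1 := (hlampos n).le
    nlinarith [sq_nonneg (f n x)]
  -- tail as a shifted tsum
  have htail : ∀ (n : ℕ), ∀ x ∈ D, ∀ y ∈ D,
      K x y - ∑ j ∈ Finset.range (n + 1), lam j * f j x * f j y
        = ∑' j : ℕ, lam (j + (n + 1)) * f (j + (n + 1)) x * f (j + (n + 1)) y := by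
    intro n x hx y hy
    have hs := (hK x hx y hy).summable
    have := Summable.sum_add_tsum_nat_add (n + 1) hs
    have hKxy : ∑' j : ℕ, lam j * f j x * f j y = K x y := (hK x hx y hy).tsum_eq
    linarith [this, hKxy]
  have ht_eq : ∀ (n : ℕ), ∀ x ∈ D,
      t n x = ∑' j : ℕ, lam (j + (n + 1)) * f (j + (n + 1)) x * f (j + (n + 1)) x := by
    intro n x hx
    exact htail n x hx x hx
  -- tail is nonneg
  have htnonneg : ∀ (n : ℕ), ∀ x ∈ D, 0 ≤ t n x := by
    intro n x hx
    rw [ht_eq n x hx]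
    exact tsum_nonneg fun j => hterm_nonneg _ _
  -- antitone in n
  have htanti : ∀ (x : EuclideanSpace ℝ (Fin d)), ∀ m n : ℕ, m ≤ n → t n x ≤ t m x := by
    intro x m n hmn
    have : ∑ j ∈ Finset.range (m + 1), lam j * f j x * f j x
        ≤ ∑ j ∈ Finset.range (n + 1), lam j * f j x * f j x :=
      Finset.sum_le_sum_of_subset_of_nonneg
        (Finset.range_subset_range.mpr (by omega)) (fun j _ _ => hterm_nonneg j x)
    simp only [ht]
    linarith
  -- pointwise convergence to 0
  have httend : ∀ x ∈ D, Tendsto (fun n => t n x) atTop (nhds 0) := by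
    intro x hx
    have hsum := hK x hx x hx
    have h1 : Tendsto (fun n => ∑ j ∈ Finset.range (n + 1), lam j * f j x * f j x)
        atTop (nhds (K x x)) :=
      (hsum.tendsto_sum_nat).comp (tendsto_add_atTop_nat 1)
    have := h1.const_sub (K x x)
    simpa using this
  -- continuity of t n on D
  have htcont : ∀ n : ℕ, ContinuousOn (t n) D := by
    intro n
    have hdiag : ContinuousOn (fun x => K x x) D := by
      have : ContinuousOn ((fun p : EuclideanSpace ℝ (Fin d) × EuclideanSpace ℝ (Fin d) => K p.1 p.2)
          ∘ (fun x => (x, x))) D := by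
        apply hKcont.comp (Continuous.continuousOn (by continuity))
        intro x hx
        exact Set.mk_mem_prod hx hx
      exact this
    apply hdiag.sub
    apply continuousOn_finset_sum
    intro j _
    exact (continuousOn_const.mul (hf j)).mul (hf j)
  -- Dini: uniform convergence of tails to 0 on compact D
  have key : ∀ ε > (0 : ℝ), ∃ N : ℕ, ∀ n ≥ N, ∀ x ∈ D, t n x < ε := by
    intro ε hε
    haveI : CompactSpace D := isCompact_iff_compactSpace.mp hD
    set u : ℕ → Set D := fun n => (fun x : D => t n x) ⁻¹' Set.Iio ε with hu
    have hopen : ∀ n, IsOpen (u n) := by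
      intro n
      exact isOpen_Iio.preimage (htcont n).restrict
    have hcover : (Set.univ : Set D) ⊆ ⋃ n, u n := by
      intro x _
      have := httend x.1 x.2
      have hev : ∀ᶠ n in atTop, t n x.1 < ε :=
        this (Iio_mem_nhds hε)
      obtain ⟨n, hn⟩ := hev.exists
      exact Set.mem_iUnion.mpr ⟨n, hn⟩
    obtain ⟨s, hs⟩ := isCompact_univ.elim_finite_subcover u hopen hcover
    refine ⟨s.sup id, fun n hn x hx => ?_⟩
    have : (⟨x, hx⟩ : D) ∈ ⋃ i ∈ s, u i := hs (Set.mem_univ _)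
    obtain ⟨i, his, hi⟩ := Set.mem_iUnion₂.mp this
    have hiN : i ≤ n := le_trans (Finset.le_sup (f := id) his) hn
    exact lt_of_le_of_lt (htanti x i n hiN) hi
  -- AM-GM bound for the off-diagonal tail
  have hbound : ∀ (n : ℕ), ∀ x ∈ D, ∀ y ∈ D,
      |K x y - ∑ j ∈ Finset.range (n + 1), lam j * f j x * f j y|
        ≤ (t n x + t n y) / 2 := by
    intro n x hx y hy
    rw [htail n x hx y hy, ht_eq n x hx, ht_eq n y hy]
    set a : ℕ → ℝ := fun j => lam (j + (n + 1)) * f (j + (n + 1)) x * f (j + (n + 1)) y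
    set b : ℕ → ℝ := fun j => lam (j + (n + 1)) * f (j + (n + 1)) x * f (j + (n + 1)) x
    set c : ℕ → ℝ := fun j => lam (j + (n + 1)) * f (j + (n + 1)) y * f (j + (n + 1)) y
    have hsb : Summable b := ((hK x hx x hx).summable).comp_injective
      (add_left_injective (n + 1))
    have hsc : Summable c := ((hK y hy y hy).summable).comp_injective
      (add_left_injective (n + 1))
    have hptwise : ∀ j, |a j| ≤ (b j + c j) / 2 := by
      intro j
      have hl := (hlampos (j + (n + 1))).le
      have h2 : |a j| = lam (j + (n + 1)) * |f (j + (n + 1)) x| * |f (j + (n + 1)) y| := by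
        simp [a, abs_mul, abs_of_nonneg hl]
      rw [h2]
      have hbx : b j = lam (j + (n + 1)) * (f (j + (n + 1)) x)^2 := by simp only [b]; ring
      have hcy : c j = lam (j + (n + 1)) * (f (j + (n + 1)) y)^2 := by simp only [c]; ring
      rw [hbx, hcy]
      have h3 : (f (j + (n + 1)) x)^2 = |f (j + (n + 1)) x|^2 := (sq_abs _).symm
      have h4 : (f (j + (n + 1)) y)^2 = |f (j + (n + 1)) y|^2 := (sq_abs _).symm
      rw [h3, h4]
      nlinarith [sq_nonneg (|f (j + (n + 1)) x| - |f (j + (n + 1)) y|),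
        abs_nonneg (f (j + (n + 1)) x), abs_nonneg (f (j + (n + 1)) y)]
    have hsbc : Summable (fun j => (b j + c j) / 2) := ((hsb.add hsc).div_const 2)
    have hsa_abs : Summable (fun j => |a j|) :=
      Summable.of_nonneg_of_le (fun j => abs_nonneg _) hptwise hsbc
    have habs : Summable (fun j => ‖a j‖) := by
      simpa only [Real.norm_eq_abs] using hsa_abs
    have h5 := norm_tsum_le_tsum_norm habs
    simp only [Real.norm_eq_abs] at h5
    calc |∑' j, a j| ≤ ∑' j, |a j| := h5
      _ ≤ ∑' j, (b j + c j) / 2 := Summable.tsum_le_tsum hptwise hsa_abs hsbc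
      _ = (∑' j, b j + ∑' j, c j) / 2 := by
            rw [tsum_div_const, Summable.tsum_add hsb hsc]
  -- conclude
  rw [Metric.tendstoUniformlyOn_iff]
  intro ε hε
  obtain ⟨N, hN⟩ := key ε hε
  filter_upwards [eventually_ge_atTop N] with n hn
  rintro ⟨x, y⟩ ⟨hx, hy⟩
  have h1 := hbound n x hx y hy
  have h2 := hN n hn x hx
  have h3 := hN n hn y hy
  rw [Real.dist_eq]
  calc |K x y - ∑ j ∈ Finset.range (n + 1), lam j * f j x * f j y|
      ≤ (t n x + t n y) / 2 := h1
    _ < (ε + ε) / 2 := by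
        have h4 : t n x + t n y < ε + ε := add_lt_add h2 h3
        have h20 : (0:ℝ) < 2 := two_pos
        exact div_lt_div_of_pos_right h4 h20
    _ = ε := by ring
end

section
/- Let D be a compact metric space, (f_n) continuous functions D → ℝ, (λ_n) positive reals with Σ λ_n f_n(x)² convergent for each x, and suppose x ↦ Σ_n λ_n f_n(x)² is continuous on D. Then the series Σ_n λ_n f_n(x) f_n(y) converges absolutely and uniformly on D × D and defines a continuous function. -/
open Filter
set_option maxHeartbeats 1000000

theorem kernel_series_uniform_convergence_of_diag_continuous
    {X : Type*} [MetricSpace X] [CompactSpace X]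
    (f : ℕ → X → ℝ) (hf : ∀ n, Continuous (f n))
    (lam : ℕ → ℝ) (hlampos : ∀ n, 0 < lam n)
    (hsum : ∀ x : X, Summable (fun n => lam n * (f n x) ^ 2))
    (hvcont : Continuous (fun x => ∑' n, lam n * (f n x) ^ 2)) :
    (∀ x y : X, Summable (fun n => |lam n * f n x * f n y|)) ∧
    TendstoUniformly
      (fun n (p : X × X) => ∑ j ∈ Finset.range (n + 1), lam j * f j p.1 * f j p.2)
      (fun p => ∑' n, lam n * f n p.1 * f n p.2) atTop ∧
    Continuous (fun p : X × X => ∑' n, lam n * f n p.1 * f n p.2) := by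
  -- basic pointwise bound
  have key : ∀ (n : ℕ) (x y : X),
      |lam n * f n x * f n y| ≤ (lam n * (f n x) ^ 2 + lam n * (f n y) ^ 2) / 2 := by
    intro n x y
    have hl := (hlampos n).le
    rw [abs_mul, abs_mul, abs_of_nonneg hl]
    nlinarith [sq_nonneg (|f n x| - |f n y|), sq_abs (f n x), sq_abs (f n y),
      abs_nonneg (f n x), abs_nonneg (f n y), mul_nonneg (abs_nonneg (f n x)) (abs_nonneg (f n y))]
  have habsnn : ∀ (n : ℕ) (x y : X), (0:ℝ) ≤ |lam n * f n x * f n y| := fun n x y => abs_nonneg _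
  have hs : ∀ x y : X, Summable (fun n => |lam n * f n x * f n y|) := by
    intro x y
    refine Summable.of_nonneg_of_le (fun n => abs_nonneg _) (fun n => key n x y) ?_
    exact (((hsum x).add (hsum y)).div_const 2)
  have hs' : ∀ x y : X, Summable (fun n => lam n * f n x * f n y) := fun x y =>
    (hs x y).of_abs
  -- tail of v
  set v : X → ℝ := fun x => ∑' n, lam n * (f n x) ^ 2 with hv
  set S : ℕ → X → ℝ := fun n x => ∑ j ∈ Finset.range (n + 1), lam j * (f j x) ^ 2 with hS
  have htail : ∀ (n : ℕ) (x : X), v x - S n x = ∑' k, lam (k + (n+1)) * (f (k + (n+1)) x) ^ 2 := by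
    intro n x
    have := Summable.sum_add_tsum_nat_add (n + 1) (hsum x)
    linarith [this]
  have htail_nonneg : ∀ (n : ℕ) (x : X), 0 ≤ v x - S n x := by
    intro n x
    rw [htail]
    exact tsum_nonneg fun k => mul_nonneg (hlampos _).le (sq_nonneg _)
  -- Dini-type: uniform smallness of tails
  have hScont : ∀ n, Continuous (S n) := fun n =>
    continuous_finset_sum _ fun j _ => continuous_const.mul ((hf j).pow 2)
  have hmono : ∀ (x : X), Monotone (fun n => S n x) := by
    intro x m n hmn
    apply Finset.sum_le_sum_of_subset_of_nonneg
    · exact Finset.range_subset_range.2 (by omega)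
    · intro j _ _; exact mul_nonneg (hlampos _).le (sq_nonneg _)
  have hSten : ∀ x, Tendsto (fun n => S n x) atTop (nhds (v x)) := by
    intro x
    have := (hsum x).hasSum.tendsto_sum_nat
    exact this.comp (tendsto_add_atTop_nat 1)
  have dini : ∀ ε > (0:ℝ), ∃ N, ∀ n ≥ N, ∀ x : X, v x - S n x < ε := by
    intro ε hε
    set U : ℕ → Set X := fun n => {x | v x - S n x < ε} with hU
    have hUopen : ∀ n, IsOpen (U n) := fun n =>
      isOpen_lt (hvcont.sub (hScont n)) continuous_const
    have hcover : Set.univ ⊆ ⋃ n, U n := by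
      intro x _
      have := hSten x
      rw [Metric.tendsto_atTop] at this
      obtain ⟨N, hN⟩ := this ε hε
      refine Set.mem_iUnion.2 ⟨N, ?_⟩
      have := hN N le_rfl
      rw [Real.dist_eq] at this
      simp only [hU, Set.mem_setOf_eq]
      have := abs_lt.1 this
      linarith [this.2]
    obtain ⟨t, ht⟩ := isCompact_univ.elim_finite_subcover U hUopen hcover
    rcases t.eq_empty_or_nonempty with h | h
    · -- X is empty
      refine ⟨0, fun n _ x => ?_⟩
      exfalso
      have := ht (Set.mem_univ x)
      simp [h] at this
    · obtain ⟨N, hN⟩ := t.exists_le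
      refine ⟨N, fun n hn x => ?_⟩
      obtain ⟨i, hi, hxi⟩ := Set.mem_iUnion₂.1 (ht (Set.mem_univ x))
      have hiN : i ≤ n := le_trans (hN i hi) hn
      have : S i x ≤ S n x := hmono x hiN
      have : v x - S n x ≤ v x - S i x := by linarith
      exact lt_of_le_of_lt this hxi
  -- uniform convergence of the kernel series
  have hunif : TendstoUniformly
      (fun n (p : X × X) => ∑ j ∈ Finset.range (n + 1), lam j * f j p.1 * f j p.2)
      (fun p => ∑' n, lam n * f n p.1 * f n p.2) atTop := by
    rw [Metric.tendstoUniformly_iff]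
    intro ε hε
    obtain ⟨N, hN⟩ := dini ε hε
    refine eventually_atTop.2 ⟨N, fun n hn p => ?_⟩
    obtain ⟨x, y⟩ := p
    have hsxy := hs' x y
    have htsub := Summable.sum_add_tsum_nat_add (n + 1) hsxy
    rw [Real.dist_eq]
    have : (∑' k, lam k * f k x * f k y) - ∑ j ∈ Finset.range (n + 1), lam j * f j x * f j y
        = ∑' k, lam (k + (n+1)) * f (k + (n+1)) x * f (k + (n+1)) y := by linarith [htsub]
    simp only at this ⊢
    rw [this]
    have hb1 : |∑' k, lam (k + (n+1)) * f (k + (n+1)) x * f (k + (n+1)) y|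
        ≤ ∑' k, |lam (k + (n+1)) * f (k + (n+1)) x * f (k + (n+1)) y| := by
      have := norm_tsum_le_tsum_norm
        (f := fun k => lam (k + (n+1)) * f (k + (n+1)) x * f (k + (n+1)) y)
        (by simpa only [Real.norm_eq_abs] using
          ((summable_nat_add_iff (n+1)).2 (hs x y)))
      simpa only [Real.norm_eq_abs] using this
    have habs_tail : Summable fun k => |lam (k + (n+1)) * f (k + (n+1)) x * f (k + (n+1)) y| :=
      ((summable_nat_add_iff (n+1)).2 (hs x y))
    have hb2 : (∑' k, |lam (k + (n+1)) * f (k + (n+1)) x * f (k + (n+1)) y|)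
        ≤ ∑' k, (lam (k + (n+1)) * (f (k + (n+1)) x) ^ 2
            + lam (k + (n+1)) * (f (k + (n+1)) y) ^ 2) / 2 := by
      refine Summable.tsum_le_tsum (fun k => key _ x y) habs_tail ?_
      exact ((((summable_nat_add_iff (n+1)).2 (hsum x)).add
        ((summable_nat_add_iff (n+1)).2 (hsum y))).div_const 2)
    have heq : (∑' k, (lam (k + (n+1)) * (f (k + (n+1)) x) ^ 2
            + lam (k + (n+1)) * (f (k + (n+1)) y) ^ 2) / 2)
        = ((v x - S n x) + (v y - S n y)) / 2 := by
      rw [htail, htail]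
      rw [← Summable.tsum_add ((summable_nat_add_iff (n+1)).2 (hsum x))
        ((summable_nat_add_iff (n+1)).2 (hsum y))]
      rw [← tsum_div_const]
    have hx := hN n hn x
    have hy := hN n hn y
    calc |∑' k, lam (k + (n+1)) * f (k + (n+1)) x * f (k + (n+1)) y|
        ≤ ((v x - S n x) + (v y - S n y)) / 2 := by rw [← heq]; exact le_trans hb1 hb2
      _ < ε := by linarith
  refine ⟨hs, hunif, ?_⟩
  exact hunif.continuous (Eventually.of_forall fun n =>
    continuous_finset_sum _ fun j _ =>
      (continuous_const.mul ((hf j).comp continuous_fst)).mul ((hf j).comp continuous_snd)).frequently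
end
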